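/- arXiv:2308.11947 — 5 statements merged into one kernel-verified Lean document; each statement's English description precedes it below -/
import Mathlib

section
/- For every k ∈ ℕ, if f : ℝ → ℝ is C^k, then for all x ≠ y, the k-th partial derivative in x of (f(y)-f(x))/(y-x) equals k! (f(y) - P_k(x,y))/(y-x)^{k+1}, where P_k(x,y) = Σ_{i=0}^{k} f^{(i)}(x)(y-x)^i / i! is the k-th Taylor polynomial of f at x. -/
open Set

/-!
Induction on `k`. As a function of the centre `x`, the derivative of `P_k(x, y)` telescopes to its top term
`f^{(k+1)}(x) (y - x)^k / k!`, so the quotient rule applied to `k! (f y - P_k(x, y)) / (y - x)^(k+1)`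
produces exactly `(k+1)! (f y - P_{k+1}(x, y)) / (y - x)^(k+2)`. Since the formula holds on the
neighbourhood `{u | u ≠ y}` of `x`, differentiating it gives the next derivative.
-/

/-- The `k`-th Taylor polynomial of `f` centered at `x`, evaluated at `y`. -/
noncomputable def taylorPoly (f : ℝ → ℝ) (k : ℕ) (x y : ℝ) : ℝ :=
  ∑ i ∈ Finset.range (k + 1), iteratedDeriv i f x * (y - x) ^ i / (i.factorial : ℝ)

theorem taylorPoly_eq_taylorWithinEval (f : ℝ → ℝ) (k : ℕ) (x y : ℝ) :
    taylorPoly f k x y = taylorWithinEval f k univ x y := by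
  rw [taylorPoly, taylor_within_apply]
  refine Finset.sum_congr rfl fun i _ => ?_
  rw [iteratedDerivWithin_univ, smul_eq_mul]
  ring

theorem taylorPoly_succ (f : ℝ → ℝ) (k : ℕ) (x y : ℝ) :
    taylorPoly f (k + 1) x y = taylorPoly f k x y
      + iteratedDeriv (k + 1) f x * (y - x) ^ (k + 1) / ((k + 1).factorial : ℝ) :=
  Finset.sum_range_succ _ _

theorem hasDerivAt_taylorPoly_center {f : ℝ → ℝ} {k : ℕ} {x : ℝ} (y : ℝ) (hf : ContDiff ℝ k f)
    (hf' : DifferentiableAt ℝ (iteratedDeriv k f) x) :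
    HasDerivAt (fun u => taylorPoly f k u y)
      (iteratedDeriv (k + 1) f x * (y - x) ^ k / (k.factorial : ℝ)) x := by
  have h := hasDerivWithinAt_taylorWithinEval (x := y) uniqueDiffOn_univ Filter.univ_mem
    (mem_univ x) subset_rfl hf.contDiffOn
    (by rw [iteratedDerivWithin_univ]; exact hf'.differentiableWithinAt)
  simp_rw [hasDerivWithinAt_univ, iteratedDerivWithin_univ, ← taylorPoly_eq_taylorWithinEval] at h
  refine h.congr_deriv ?_
  rw [smul_eq_mul]
  ring

theorem hasDerivAt_taylorRemainder_div_pow {f : ℝ → ℝ} {k : ℕ} {x y : ℝ} (hxy : x ≠ y)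
    (hf : ContDiff ℝ k f) (hf' : DifferentiableAt ℝ (iteratedDeriv k f) x) :
    HasDerivAt (fun u => (k.factorial : ℝ) * (f y - taylorPoly f k u y) / (y - u) ^ (k + 1))
      (((k + 1).factorial : ℝ) * (f y - taylorPoly f (k + 1) x y) / (y - x) ^ (k + 2)) x := by
  have hyx : y - x ≠ 0 := sub_ne_zero.mpr hxy.symm
  have hnum := ((hasDerivAt_taylorPoly_center y hf hf').const_sub (f y)).const_mul
    (k.factorial : ℝ)
  have hquot := hnum.div (monomial_has_deriv_aux x y k) (pow_ne_zero (k + 1) hyx)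
  refine hquot.congr_deriv ?_
  rw [taylorPoly_succ, Nat.factorial_succ]
  push_cast
  field_simp
  ring

theorem iteratedDeriv_difference_quotient (k : ℕ) (f : ℝ → ℝ) (hf : ContDiff ℝ k f)
    (x y : ℝ) (hxy : x ≠ y) :
    iteratedDeriv k (fun u => (f y - f u) / (y - u)) x
      = (k.factorial : ℝ) * (f y - taylorPoly f k x y) / (y - x) ^ (k + 1) := by
  induction k generalizing x with
  | zero => simp [taylorPoly]
  | succ k ih =>
    have hformula : (fun u => iteratedDeriv k (fun u => (f y - f u) / (y - u)) u)
        =ᶠ[nhds x] fun u => (k.factorial : ℝ) * (f y - taylorPoly f k u y) / (y - u) ^ (k + 1) := by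
      filter_upwards [eventually_ne_nhds hxy] with u hu
      exact ih hf.of_succ u hu
    rw [iteratedDeriv_succ, hformula.deriv_eq]
    exact (hasDerivAt_taylorRemainder_div_pow hxy hf.of_succ
      (hf.differentiable_iteratedDeriv k (by exact_mod_cast k.lt_succ_self) x)).deriv
end

section
/- If f ∈ C^{0,α}([a,b]) with 0 < α < 1, then for any x₁, x₂ ∈ [a,b] with x₁ ≠ x₂, |Tf(x₂) - Tf(x₁)| ≤ C ‖f‖_{C^{0,α}} |x₂-x₁|^α (ln|(b-a)/(x₂-x₁)| + 1), where C depends only on α. In particular Tf ∈ C^{0,α₀}([a,b]) for every 0 < α₀ < α. -/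
/-!
Write `δ = |x₂ - x₁|` and `Tf(x) = ∫ slope f x`. On the part of `[a, b]` within `2δ` of `x₁`,
each kernel is bounded by `M |y - x|^(α - 1)`, whose integral there is `O(δ^α / α)`. Away from
`x₁` the difference of the two kernels is
`(f x₁ - f x₂) / (y - x₂) + (f y - f x₁)(x₂ - x₁) / ((y - x₂)(y - x₁))`; the first term is
`≤ M δ^α / |y - x₂|` and integrates to `2 M δ^α log((b - a)/δ)`, the second is
`≤ 2 M δ |y - x₁|^(α - 2)` and integrates to `O(δ^α / (1 - α))`. Each of these integrals is
compared with `∫ φ (|y - c|) dy = 2 ∫_0^∞ φ` for a power `φ` cut off to an interval. The weaker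
Hölder bound follows from `log u ≤ u^β / β`.
-/

open Set Filter intervalIntegral

/-- The operator `T`: `Tf(x) = ∫_a^b (f(y)-f(x))/(y-x) dy`. -/
noncomputable def Thilb (a b : ℝ) (f : ℝ → ℝ) (x : ℝ) : ℝ :=
  ∫ y in a..b, (f y - f x) / (y - x)

open MeasureTheory Topology

lemma MeasureTheory.Integrable.comp_abs {ψ : ℝ → ℝ} (h : Integrable ψ) :
    Integrable fun x => ψ |x| := by
  rw [← integrableOn_univ, ← Iic_union_Ici (a := (0 : ℝ)), integrableOn_union]
  constructor
  · refine h.comp_neg.integrableOn.congr_fun (fun x hx => ?_) measurableSet_Iic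
    simp [abs_of_nonpos (mem_Iic.1 hx)]
  · exact h.integrableOn.congr_fun (fun x hx => by simp [abs_of_nonneg (mem_Ici.1 hx)])
      measurableSet_Ici

section AbsSub

variable {φ : ℝ → ℝ} {K A : Set ℝ} {c : ℝ}

lemma MeasureTheory.IntegrableOn.comp_abs_sub (hφ : IntegrableOn φ K) (hK : MeasurableSet K)
    (hA : MeasurableSet A) (hAK : ∀ y ∈ A, |y - c| ∈ K) :
    IntegrableOn (fun y => φ |y - c|) A := by
  have h := (((integrable_indicator_iff hK).2 hφ).comp_abs).comp_sub_right c
  exact h.integrableOn.congr_fun (fun y hy => indicator_of_mem (hAK y hy) φ) hA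

lemma setIntegral_comp_abs_sub_le (hφ : IntegrableOn φ K) (hK : MeasurableSet K)
    (hφ0 : ∀ t ∈ K, 0 ≤ φ t) (hA : MeasurableSet A) (hAK : ∀ y ∈ A, |y - c| ∈ K) :
    ∫ y in A, φ |y - c| ≤ 2 * ∫ t in K, φ t := by
  have hψ := (integrable_indicator_iff hK).2 hφ
  have hψ0 : ∀ t, 0 ≤ K.indicator φ t := fun t => indicator_nonneg hφ0 t
  calc ∫ y in A, φ |y - c| = ∫ y in A, K.indicator φ |y - c| :=
        setIntegral_congr_fun hA fun y hy => (indicator_of_mem (hAK y hy) φ).symm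
    _ ≤ ∫ y, K.indicator φ |y - c| :=
        setIntegral_le_integral (hψ.comp_abs.comp_sub_right c) (.of_forall fun _ => hψ0 _)
    _ = 2 * ∫ t in Ioi 0, K.indicator φ t := by
        rw [integral_sub_right_eq_self (fun y => K.indicator φ |y|), integral_comp_abs]
    _ ≤ 2 * ∫ t, K.indicator φ t :=
        mul_le_mul_of_nonneg_left (setIntegral_le_integral hψ (.of_forall hψ0)) zero_le_two
    _ = 2 * ∫ t in K, φ t := by rw [MeasureTheory.integral_indicator hK]

end AbsSub

lemma integrableOn_Icc_zero_rpow {β : ℝ} (hβ : -1 < β) (r : ℝ) :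
    IntegrableOn (fun t => t ^ β) (Icc 0 r) := by
  rcases lt_or_ge r 0 with hr | hr
  · simp [Icc_eq_empty_of_lt hr]
  · rw [integrableOn_Icc_iff_integrableOn_Ioc, ← intervalIntegrable_iff_integrableOn_Ioc_of_le hr]
    exact intervalIntegrable_rpow' hβ

lemma integral_Icc_zero_rpow {β r : ℝ} (hβ : -1 < β) (hr : 0 ≤ r) :
    ∫ t in Icc 0 r, t ^ β = r ^ (β + 1) / (β + 1) := by
  rw [integral_Icc_eq_integral_Ioc, ← integral_of_le hr, integral_rpow (Or.inl hβ),
    Real.zero_rpow (by linarith), sub_zero]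

section ModelIntegrals

variable {A : Set ℝ} {c β r : ℝ}

lemma integrableOn_abs_sub_rpow (hβ : -1 < β) (hA : MeasurableSet A)
    (hAr : ∀ y ∈ A, |y - c| ≤ r) : IntegrableOn (fun y => |y - c| ^ β) A :=
  (integrableOn_Icc_zero_rpow hβ r).comp_abs_sub measurableSet_Icc hA
    fun y hy => ⟨abs_nonneg _, hAr y hy⟩

lemma setIntegral_abs_sub_rpow_le (hβ : -1 < β) (hr : 0 ≤ r) (hA : MeasurableSet A)
    (hAr : ∀ y ∈ A, |y - c| ≤ r) : ∫ y in A, |y - c| ^ β ≤ 2 * (r ^ (β + 1) / (β + 1)) := by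
  rw [← integral_Icc_zero_rpow hβ hr]
  exact setIntegral_comp_abs_sub_le (integrableOn_Icc_zero_rpow hβ r) measurableSet_Icc
    (fun t ht => Real.rpow_nonneg ht.1 _) hA fun y hy => ⟨abs_nonneg _, hAr y hy⟩

lemma integrableOn_abs_sub_rpow_of_lt (hβ : β < -1) (hr : 0 < r) (hA : MeasurableSet A)
    (hAr : ∀ y ∈ A, r < |y - c|) : IntegrableOn (fun y => |y - c| ^ β) A :=
  (integrableOn_Ioi_rpow_of_lt hβ hr).comp_abs_sub measurableSet_Ioi hA hAr

lemma setIntegral_abs_sub_rpow_le_of_lt (hβ : β < -1) (hr : 0 < r) (hA : MeasurableSet A)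
    (hAr : ∀ y ∈ A, r < |y - c|) :
    ∫ y in A, |y - c| ^ β ≤ 2 * (-r ^ (β + 1) / (β + 1)) := by
  rw [← integral_Ioi_rpow_of_lt hβ hr]
  exact setIntegral_comp_abs_sub_le (integrableOn_Ioi_rpow_of_lt hβ hr) measurableSet_Ioi
    (fun t ht => Real.rpow_nonneg (hr.trans ht).le _) hA hAr

lemma integrableOn_Icc_inv {L : ℝ} (hr : 0 < r) : IntegrableOn (fun t : ℝ => t⁻¹) (Icc r L) :=
  (continuousOn_inv₀.mono fun _ ht => (hr.trans_le (mem_Icc.1 ht).1).ne').integrableOn_Icc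

lemma integrableOn_abs_sub_inv {L : ℝ} (hr : 0 < r) (hA : MeasurableSet A)
    (hAr : ∀ y ∈ A, |y - c| ∈ Icc r L) : IntegrableOn (fun y => |y - c|⁻¹) A :=
  (integrableOn_Icc_inv hr).comp_abs_sub measurableSet_Icc hA hAr

lemma setIntegral_abs_sub_inv_le {L : ℝ} (hr : 0 < r) (hrL : r ≤ L) (hA : MeasurableSet A)
    (hAr : ∀ y ∈ A, |y - c| ∈ Icc r L) : ∫ y in A, |y - c|⁻¹ ≤ 2 * Real.log (L / r) := by
  rw [← integral_inv_of_pos hr (hr.trans_le hrL), integral_of_le hrL,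
    ← integral_Icc_eq_integral_Ioc]
  exact setIntegral_comp_abs_sub_le (integrableOn_Icc_inv hr) measurableSet_Icc
    (fun t ht => inv_nonneg.2 (hr.le.trans ht.1)) hA hAr

end ModelIntegrals

section Holder

variable {s : Set ℝ} {f : ℝ → ℝ} {M α : ℝ}

lemma continuousOn_of_abs_sub_le_rpow (hα : 0 < α)
    (hf : ∀ x ∈ s, ∀ y ∈ s, |f x - f y| ≤ M * |x - y| ^ α) : ContinuousOn f s := by
  intro x hx
  have hbound : Tendsto (fun y => M * |y - x| ^ α) (𝓝 x) (𝓝 0) := by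
    have : Continuous fun y => M * |y - x| ^ α := by
      have := Real.continuous_rpow_const hα.le
      fun_prop
    simpa [Real.zero_rpow hα.ne'] using this.tendsto x
  refine tendsto_iff_dist_tendsto_zero.2
    (squeeze_zero' (.of_forall fun _ => dist_nonneg) ?_ (hbound.mono_left nhdsWithin_le_nhds))
  filter_upwards [self_mem_nhdsWithin] with y hy using hf y hy x hx

lemma abs_slope_le_rpow (hM : 0 ≤ M) (hf : ∀ x ∈ s, ∀ y ∈ s, |f x - f y| ≤ M * |x - y| ^ α)
    {x y : ℝ} (hx : x ∈ s) (hy : y ∈ s) : |slope f x y| ≤ M * |y - x| ^ (α - 1) := by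
  rcases eq_or_ne y x with rfl | hne
  · simpa using mul_nonneg hM (Real.rpow_nonneg le_rfl _)
  have hpos : 0 < |y - x| := abs_pos.2 (sub_ne_zero.2 hne)
  rw [slope_def_field, abs_div, Real.rpow_sub_one hpos.ne', ← mul_div_assoc]
  exact div_le_div_of_nonneg_right (hf y hy x hx) hpos.le

lemma integrableOn_slope (hα : 0 < α) (hM : 0 ≤ M)
    (hf : ∀ x ∈ s, ∀ y ∈ s, |f x - f y| ≤ M * |x - y| ^ α) (hs : MeasurableSet s) {x r : ℝ}
    (hx : x ∈ s) (hsr : ∀ y ∈ s, |y - x| ≤ r) : IntegrableOn (slope f x) s := by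
  have hmaj : IntegrableOn (fun y => M * |y - x| ^ (α - 1)) s :=
    (integrableOn_abs_sub_rpow (by linarith) hs hsr).const_mul M
  have hmeas : AEStronglyMeasurable (slope f x) (volume.restrict s) :=
    ((measurable_sub_const x).inv.aestronglyMeasurable).smul
      (((continuousOn_of_abs_sub_le_rpow hα hf).sub continuousOn_const).aestronglyMeasurable hs)
  exact hmaj.mono' hmeas
    ((ae_restrict_iff' hs).2 (.of_forall fun _ hy => abs_slope_le_rpow hM hf hx hy))

lemma abs_slope_sub_slope_le (hM : 0 ≤ M)
    (hf : ∀ x ∈ s, ∀ y ∈ s, |f x - f y| ≤ M * |x - y| ^ α) {x₁ x₂ y : ℝ} (hx₁ : x₁ ∈ s)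
    (hx₂ : x₂ ∈ s) (hy : y ∈ s) (hfar : 2 * |x₂ - x₁| < |y - x₁|) :
    |slope f x₂ y - slope f x₁ y|
      ≤ M * |x₂ - x₁| ^ α * |y - x₂|⁻¹ + 2 * M * |x₂ - x₁| * |y - x₁| ^ (α - 2) := by
  have hpos₁ : 0 < |y - x₁| := (mul_nonneg zero_le_two (abs_nonneg _)).trans_lt hfar
  have hhalf : |y - x₁| ≤ 2 * |y - x₂| := by
    linarith [abs_sub_le y x₂ x₁]
  have hpos₂ : 0 < |y - x₂| := by linarith
  have hsplit : slope f x₂ y - slope f x₁ y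
      = (f x₁ - f x₂) / (y - x₂) + (f y - f x₁) * (x₂ - x₁) / ((y - x₂) * (y - x₁)) := by
    rw [slope_def_field, slope_def_field]
    field_simp [abs_pos.1 hpos₁, abs_pos.1 hpos₂]
    ring
  rw [hsplit]
  refine (abs_add_le _ _).trans (add_le_add ?_ ?_)
  · rw [abs_div, div_eq_mul_inv, abs_sub_comm x₂ x₁]
    gcongr
    exact hf x₁ hx₁ x₂ hx₂
  · rw [abs_div, abs_mul, abs_mul]
    calc |f y - f x₁| * |x₂ - x₁| / (|y - x₂| * |y - x₁|)
        ≤ M * |y - x₁| ^ α * |x₂ - x₁| / (|y - x₁| / 2 * |y - x₁|) := by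
          gcongr
          · exact hf y hy x₁ hx₁
          · linarith
      _ = 2 * M * |x₂ - x₁| * |y - x₁| ^ (α - 2) := by
          rw [Real.rpow_sub hpos₁, Real.rpow_two]
          field_simp

lemma setIntegral_abs_slope_sub_slope_le_of_near (hα : 0 < α) (hM : 0 ≤ M)
    (hf : ∀ x ∈ s, ∀ y ∈ s, |f x - f y| ≤ M * |x - y| ^ α) {x₁ x₂ r : ℝ} (hx₁ : x₁ ∈ s)
    (hx₂ : x₂ ∈ s) (hr : 0 ≤ r) {A : Set ℝ} (hA : MeasurableSet A) (hAs : A ⊆ s)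
    (hr₁ : ∀ y ∈ A, |y - x₁| ≤ r) (hr₂ : ∀ y ∈ A, |y - x₂| ≤ r) :
    ∫ y in A, |slope f x₂ y - slope f x₁ y| ≤ 4 * M * r ^ α / α := by
  have hβ : -1 < α - 1 := by linarith
  calc ∫ y in A, |slope f x₂ y - slope f x₁ y|
      ≤ ∫ y in A, (M * |y - x₂| ^ (α - 1) + M * |y - x₁| ^ (α - 1)) := by
        refine integral_mono_of_nonneg (.of_forall fun _ => abs_nonneg _)
          (((integrableOn_abs_sub_rpow hβ hA hr₂).const_mul M).add
            ((integrableOn_abs_sub_rpow hβ hA hr₁).const_mul M))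
          ((ae_restrict_iff' hA).2 (.of_forall fun y hy => ?_))
        exact (abs_sub _ _).trans (add_le_add (abs_slope_le_rpow hM hf hx₂ (hAs hy))
          (abs_slope_le_rpow hM hf hx₁ (hAs hy)))
    _ = (M * ∫ y in A, |y - x₂| ^ (α - 1)) + M * ∫ y in A, |y - x₁| ^ (α - 1) := by
        rw [integral_add ((integrableOn_abs_sub_rpow hβ hA hr₂).const_mul M)
          ((integrableOn_abs_sub_rpow hβ hA hr₁).const_mul M), MeasureTheory.integral_const_mul,
          MeasureTheory.integral_const_mul]
    _ ≤ M * (2 * (r ^ α / α)) + M * (2 * (r ^ α / α)) := by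
        have h : ∀ c, (∀ y ∈ A, |y - c| ≤ r) → ∫ y in A, |y - c| ^ (α - 1) ≤ 2 * (r ^ α / α) :=
          fun c hc => by simpa using setIntegral_abs_sub_rpow_le hβ hr hA hc
        exact add_le_add (mul_le_mul_of_nonneg_left (h x₂ hr₂) hM)
          (mul_le_mul_of_nonneg_left (h x₁ hr₁) hM)
    _ = 4 * M * r ^ α / α := by ring

lemma setIntegral_abs_slope_sub_slope_le_of_far (hα1 : α < 1) (hM : 0 ≤ M)
    (hf : ∀ x ∈ s, ∀ y ∈ s, |f x - f y| ≤ M * |x - y| ^ α) {x₁ x₂ L : ℝ} (hx₁ : x₁ ∈ s)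
    (hx₂ : x₂ ∈ s) (hne : x₁ ≠ x₂) (hL : |x₂ - x₁| ≤ L) {A : Set ℝ} (hA : MeasurableSet A)
    (hAs : A ⊆ s) (hfar : ∀ y ∈ A, 2 * |x₂ - x₁| < |y - x₁|) (hAL : ∀ y ∈ A, |y - x₂| ≤ L) :
    ∫ y in A, |slope f x₂ y - slope f x₁ y|
      ≤ 2 * M * |x₂ - x₁| ^ α * Real.log (L / |x₂ - x₁|) + 4 * M / (1 - α) * |x₂ - x₁| ^ α := by
  set δ := |x₂ - x₁|
  have hδ : 0 < δ := abs_pos.2 (sub_ne_zero.2 hne.symm)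
  have hα' : 0 < 1 - α := by linarith
  have hβ : α - 2 < -1 := by linarith
  have hA₂ : ∀ y ∈ A, |y - x₂| ∈ Icc δ L := fun y hy =>
    ⟨by linarith [hfar y hy, abs_sub_le y x₂ x₁], hAL y hy⟩
  have hint₂ := (integrableOn_abs_sub_inv hδ hA hA₂).const_mul (M * δ ^ α)
  have hint₁ := (integrableOn_abs_sub_rpow_of_lt hβ (by positivity) hA hfar).const_mul (2 * M * δ)
  have hpow : δ * (2 * δ) ^ (α - 2 + 1) ≤ δ ^ α := by
    rw [← le_div_iff₀' hδ, show α - 2 + 1 = α - 1 by ring, ← Real.rpow_sub_one hδ.ne']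
    exact Real.rpow_le_rpow_of_nonpos hδ (by linarith) (by linarith)
  calc ∫ y in A, |slope f x₂ y - slope f x₁ y|
      ≤ ∫ y in A, (M * δ ^ α * |y - x₂|⁻¹ + 2 * M * δ * |y - x₁| ^ (α - 2)) := by
        refine integral_mono_of_nonneg (.of_forall fun _ => abs_nonneg _) (hint₂.add hint₁)
          ((ae_restrict_iff' hA).2 (.of_forall fun y hy => ?_))
        exact abs_slope_sub_slope_le hM hf hx₁ hx₂ (hAs hy) (hfar y hy)
    _ = (M * δ ^ α * ∫ y in A, |y - x₂|⁻¹) + 2 * M * δ * ∫ y in A, |y - x₁| ^ (α - 2) := by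
        rw [integral_add hint₂ hint₁, MeasureTheory.integral_const_mul,
          MeasureTheory.integral_const_mul]
    _ ≤ M * δ ^ α * (2 * Real.log (L / δ))
          + 2 * M * δ * (2 * (-(2 * δ) ^ (α - 2 + 1) / (α - 2 + 1))) :=
        add_le_add
          (mul_le_mul_of_nonneg_left (setIntegral_abs_sub_inv_le hδ hL hA hA₂)
            (mul_nonneg hM (Real.rpow_nonneg hδ.le _)))
          (mul_le_mul_of_nonneg_left
            (setIntegral_abs_sub_rpow_le_of_lt hβ (by positivity) hA hfar) (by positivity))
    _ = 2 * M * δ ^ α * Real.log (L / δ) + 4 * M / (1 - α) * (δ * (2 * δ) ^ (α - 2 + 1)) := by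
        rw [show α - 2 + 1 = α - 1 by ring]
        field_simp [hα'.ne', show α - 1 ≠ 0 by linarith]
        ring
    _ ≤ 2 * M * δ ^ α * Real.log (L / δ) + 4 * M / (1 - α) * δ ^ α := by gcongr

end Holder

lemma Thilb_eq_integral_slope (a b : ℝ) (f : ℝ → ℝ) (x : ℝ) :
    Thilb a b f x = ∫ y in a..b, slope f x y := by
  simp only [Thilb, slope_def_field]

lemma rpow_mul_log_div_add_one_le {β δ L : ℝ} (hβ : 0 < β) (hδ : 0 < δ) (hδL : δ ≤ L) :
    δ ^ β * (Real.log (L / δ) + 1) ≤ L ^ β * (1 / β + 1) := by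
  have hL : 0 < L := hδ.trans_le hδL
  calc δ ^ β * (Real.log (L / δ) + 1) ≤ δ ^ β * ((L / δ) ^ β / β) + L ^ β := by
        rw [mul_add, mul_one]
        gcongr
        exact Real.log_le_rpow_div (div_pos hL hδ).le hβ
    _ = L ^ β * (1 / β + 1) := by
        rw [Real.div_rpow hL.le hδ.le]
        field_simp [(Real.rpow_pos_of_pos hδ β).ne']

noncomputable def logHolderConst (α : ℝ) : ℝ := 12 / α + 4 / (1 - α) + 2

lemma logHolderConst_pos {α : ℝ} (hα : 0 < α) (hα1 : α < 1) : 0 < logHolderConst α := by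
  unfold logHolderConst
  positivity [sub_pos.2 hα1]

lemma add_le_logHolderConst_mul {α M δ ℓ : ℝ} (hα : 0 < α) (hα1 : α < 1) (hM : 0 ≤ M)
    (hδ : 0 ≤ δ) (hℓ : 0 ≤ ℓ) :
    4 * M * (3 * δ) ^ α / α + (2 * M * δ ^ α * ℓ + 4 * M / (1 - α) * δ ^ α)
      ≤ logHolderConst α * M * δ ^ α * (ℓ + 1) := by
  have hpow : (3 * δ) ^ α ≤ 3 * δ ^ α := by
    rw [Real.mul_rpow zero_le_three hδ]
    gcongr
    exact Real.rpow_le_self_of_one_le (by norm_num) hα1.le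
  have hslack : 0 ≤ (12 / α + 4 / (1 - α)) * (M * δ ^ α * ℓ) + 2 * (M * δ ^ α) := by
    positivity [sub_pos.2 hα1]
  calc 4 * M * (3 * δ) ^ α / α + (2 * M * δ ^ α * ℓ + 4 * M / (1 - α) * δ ^ α)
      ≤ 4 * M * (3 * δ ^ α) / α + (2 * M * δ ^ α * ℓ + 4 * M / (1 - α) * δ ^ α) := by
        gcongr
    _ ≤ 4 * M * (3 * δ ^ α) / α + (2 * M * δ ^ α * ℓ + 4 * M / (1 - α) * δ ^ α)
          + ((12 / α + 4 / (1 - α)) * (M * δ ^ α * ℓ) + 2 * (M * δ ^ α)) :=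
        le_add_of_nonneg_right hslack
    _ = logHolderConst α * M * δ ^ α * (ℓ + 1) := by
        unfold logHolderConst
        ring

section Thilb

variable {a b M α : ℝ} {f : ℝ → ℝ}

lemma abs_Thilb_sub_le_setIntegral_inter_add_sdiff (hα : 0 < α) (hab : a ≤ b) (hM : 0 ≤ M)
    (hf : ∀ x ∈ Icc a b, ∀ y ∈ Icc a b, |f x - f y| ≤ M * |x - y| ^ α) {x₁ x₂ : ℝ}
    (hx₁ : x₁ ∈ Icc a b) (hx₂ : x₂ ∈ Icc a b) {B : Set ℝ} (hB : MeasurableSet B) :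
    |Thilb a b f x₂ - Thilb a b f x₁|
      ≤ (∫ y in Ioc a b ∩ B, |slope f x₂ y - slope f x₁ y|)
        + ∫ y in Ioc a b \ B, |slope f x₂ y - slope f x₁ y| := by
  have hint : ∀ x ∈ Icc a b, IntegrableOn (slope f x) (Ioc a b) := fun x hx =>
    (integrableOn_slope hα hM hf measurableSet_Icc hx fun _ hy =>
      abs_sub_le_of_le_of_le hy.1 hy.2 hx.1 hx.2).mono_set Ioc_subset_Icc_self
  have hint' : ∀ x ∈ Icc a b, IntervalIntegrable (slope f x) volume a b := fun x hx =>
    (intervalIntegrable_iff_integrableOn_Ioc_of_le hab).2 (hint x hx)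
  calc |Thilb a b f x₂ - Thilb a b f x₁|
      = |∫ y in a..b, (slope f x₂ y - slope f x₁ y)| := by
        rw [Thilb_eq_integral_slope, Thilb_eq_integral_slope,
          intervalIntegral.integral_sub (hint' x₂ hx₂) (hint' x₁ hx₁)]
    _ ≤ ∫ y in Ioc a b, |slope f x₂ y - slope f x₁ y| :=
        (abs_integral_le_integral_abs hab).trans_eq (integral_of_le hab)
    _ = _ := (integral_inter_add_sdiff hB ((hint x₂ hx₂).sub (hint x₁ hx₁)).abs).symm

theorem abs_Thilb_sub_le (hα : 0 < α) (hα1 : α < 1) (hab : a ≤ b) (hM : 0 ≤ M)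
    (hf : ∀ x ∈ Icc a b, ∀ y ∈ Icc a b, |f x - f y| ≤ M * |x - y| ^ α) {x₁ x₂ : ℝ}
    (hx₁ : x₁ ∈ Icc a b) (hx₂ : x₂ ∈ Icc a b) (hne : x₁ ≠ x₂) :
    |Thilb a b f x₂ - Thilb a b f x₁|
      ≤ logHolderConst α * M * |x₂ - x₁| ^ α * (Real.log ((b - a) / |x₂ - x₁|) + 1) := by
  set δ := |x₂ - x₁|
  have hδ : 0 < δ := abs_pos.2 (sub_ne_zero.2 hne.symm)
  have hdist : ∀ {x y}, x ∈ Icc a b → y ∈ Icc a b → |y - x| ≤ b - a := fun hx hy =>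
    abs_sub_le_of_le_of_le hy.1 hy.2 hx.1 hx.2
  set B := Metric.closedBall x₁ (2 * δ)
  have hnear := setIntegral_abs_slope_sub_slope_le_of_near hα hM hf hx₁ hx₂ (r := 3 * δ)
    (A := Ioc a b ∩ B) (by positivity) (measurableSet_Ioc.inter measurableSet_closedBall)
    (inter_subset_left.trans Ioc_subset_Icc_self)
    (fun y hy => by
      have : |y - x₁| ≤ 2 * δ := by simpa [B, Real.dist_eq] using hy.2
      linarith)
    (fun y hy => by
      have : |y - x₁| ≤ 2 * δ := by simpa [B, Real.dist_eq] using hy.2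
      linarith [abs_sub_le y x₁ x₂, abs_sub_comm x₁ x₂])
  have hfar := setIntegral_abs_slope_sub_slope_le_of_far hα1 hM hf hx₁ hx₂ hne (hdist hx₁ hx₂)
    (A := Ioc a b \ B) (measurableSet_Ioc.diff measurableSet_closedBall)
    (sdiff_subset.trans Ioc_subset_Icc_self)
    (fun y hy => by simpa [B, Real.dist_eq] using hy.2)
    (fun y hy => hdist hx₂ (Ioc_subset_Icc_self hy.1))
  have hlog : 0 ≤ Real.log ((b - a) / δ) := Real.log_nonneg ((one_le_div hδ).2 (hdist hx₁ hx₂))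
  exact (abs_Thilb_sub_le_setIntegral_inter_add_sdiff hα hab hM hf hx₁ hx₂
    measurableSet_closedBall).trans
      ((add_le_add hnear hfar).trans (add_le_logHolderConst_mul hα hα1 hM hδ.le hlog))

theorem abs_Thilb_sub_le_rpow (hα : 0 < α) (hα1 : α < 1) (hab : a ≤ b) (hM : 0 ≤ M)
    (hf : ∀ x ∈ Icc a b, ∀ y ∈ Icc a b, |f x - f y| ≤ M * |x - y| ^ α) {α₀ : ℝ} (hα₀ : 0 < α₀)
    (hα₀α : α₀ < α) {x₁ x₂ : ℝ} (hx₁ : x₁ ∈ Icc a b) (hx₂ : x₂ ∈ Icc a b) :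
    |Thilb a b f x₂ - Thilb a b f x₁|
      ≤ logHolderConst α * M * ((b - a) ^ (α - α₀) * (1 / (α - α₀) + 1)) * |x₂ - x₁| ^ α₀ := by
  rcases eq_or_ne x₁ x₂ with rfl | hne
  · simp [Real.zero_rpow hα₀.ne']
  set δ := |x₂ - x₁|
  have hδ : 0 < δ := abs_pos.2 (sub_ne_zero.2 hne.symm)
  calc |Thilb a b f x₂ - Thilb a b f x₁|
      ≤ logHolderConst α * M * δ ^ α * (Real.log ((b - a) / δ) + 1) :=
        abs_Thilb_sub_le hα hα1 hab hM hf hx₁ hx₂ hne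
    _ = logHolderConst α * M * (δ ^ (α - α₀) * (Real.log ((b - a) / δ) + 1)) * δ ^ α₀ := by
        rw [← sub_add_cancel α α₀, Real.rpow_add hδ, add_sub_cancel_right]
        ring
    _ ≤ logHolderConst α * M * ((b - a) ^ (α - α₀) * (1 / (α - α₀) + 1)) * δ ^ α₀ := by
        have := (logHolderConst_pos hα hα1).le
        gcongr logHolderConst α * M * ?_ * _
        exact rpow_mul_log_div_add_one_le (sub_pos.2 hα₀α) hδ
          (abs_sub_le_of_le_of_le hx₂.1 hx₂.2 hx₁.1 hx₁.2)

end Thilb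

theorem T_log_holder (α : ℝ) (hα : 0 < α) (hα1 : α < 1) :
    ∃ C > 0, ∀ (a b : ℝ), a < b → ∀ (f : ℝ → ℝ) (M : ℝ), 0 ≤ M →
      (∀ x ∈ Icc a b, ∀ y ∈ Icc a b, |f x - f y| ≤ M * |x - y| ^ α) →
      ((∀ x₁ ∈ Icc a b, ∀ x₂ ∈ Icc a b, x₁ ≠ x₂ →
          |Thilb a b f x₂ - Thilb a b f x₁|
            ≤ C * M * |x₂ - x₁| ^ α * (Real.log ((b - a) / |x₂ - x₁|) + 1)) ∧
        (∀ α₀, 0 < α₀ → α₀ < α → ∃ C', ∀ x₁ ∈ Icc a b, ∀ x₂ ∈ Icc a b,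
          |Thilb a b f x₂ - Thilb a b f x₁| ≤ C' * |x₂ - x₁| ^ α₀)) :=
  ⟨logHolderConst α, logHolderConst_pos hα hα1, fun _ _ hab _ _ hM hf =>
    ⟨fun _ hx₁ _ hx₂ hne => abs_Thilb_sub_le hα hα1 hab.le hM hf hx₁ hx₂ hne,
      fun _ hα₀ hα₀α => ⟨_, fun _ hx₁ _ hx₂ =>
        abs_Thilb_sub_le_rpow hα hα1 hab.le hM hf hα₀ hα₀α hx₁ hx₂⟩⟩⟩
end

section
/- If f ∈ C^{k+1,α}([a,b]) with 0 < α < 1, then the function R(x,y) = (f(y) - P_k(x,y))/(y-x)^{k+1}, extended to y = x via R(x,x) = f^{(k+1)}(x)/(k+1)!, equals (1/k!) ∫_0^1 (1-s)^k f^{(k+1)}(s y + (1-s)x) ds for all x, y ∈ [a,b], and is Hölder continuous of exponent α in (x,y) jointly: |R(x₁,y₁) - R(x₂,y₂)| ≤ ‖f‖_{C^{k+1,α}} (|x₁-x₂|^α + |y₁-y₂|^α) / k!. -/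
open Set intervalIntegral

/-- The `k`-th Taylor polynomial of `f` centered at `x` (derivatives within `s`), at `y`. -/
noncomputable def taylorPolyWithin (f : ℝ → ℝ) (s : Set ℝ) (k : ℕ) (x y : ℝ) : ℝ :=
  ∑ i ∈ Finset.range (k + 1), iteratedDerivWithin i f s x * (y - x) ^ i / (i.factorial : ℝ)

/-- The normalized Taylor remainder `R(x,y)`, extended across the diagonal. -/
noncomputable def remainderQuot (f : ℝ → ℝ) (s : Set ℝ) (k : ℕ) (x y : ℝ) : ℝ :=
  if y = x then iteratedDerivWithin (k + 1) f s x / ((k + 1).factorial : ℝ)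
  else (f y - taylorPolyWithin f s k x y) / (y - x) ^ (k + 1)

/-!
Substituting `t = x + s (y - x)` in Taylor's formula with integral remainder gives
`R(x, y) = (1/k!) ∫₀¹ (1 - s)^k f⁽ᵏ⁺¹⁾(s y + (1 - s) x) ds` off the diagonal; on the
diagonal the right side is `f⁽ᵏ⁺¹⁾(x) / (k+1)!` because `∫₀¹ (1 - s)^k ds = 1/(k+1)`.
For the Hölder bound compare the two integrands pointwise: the evaluation points differ by
`s (y₁ - y₂) + (1 - s) (x₁ - x₂)`, of absolute value at most `max |x₁ - x₂| |y₁ - y₂|`,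
and `(1 - s)^k ≤ 1`.
-/

section TaylorWithinSubset

variable {E : Type*} [NormedAddCommGroup E] [NormedSpace ℝ E] {f : ℝ → E} {s t : Set ℝ}

theorem iteratedDerivWithin_subset {n : ℕ} {x : ℝ} (st : s ⊆ t) (hs : UniqueDiffOn ℝ s)
    (ht : UniqueDiffOn ℝ t) (hf : ContDiffOn ℝ n f t) (hx : x ∈ s) :
    iteratedDerivWithin n f s x = iteratedDerivWithin n f t x := by
  simp only [iteratedDerivWithin_eq_iteratedFDerivWithin,
    iteratedFDerivWithin_subset st hs ht hf hx]

theorem taylorWithinEval_subset {n : ℕ} {x₀ : ℝ} (x : ℝ) (st : s ⊆ t) (hs : UniqueDiffOn ℝ s)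
    (ht : UniqueDiffOn ℝ t) (hf : ContDiffOn ℝ n f t) (hx₀ : x₀ ∈ s) :
    taylorWithinEval f n s x₀ x = taylorWithinEval f n t x₀ x := by
  simp only [taylor_within_apply]
  refine Finset.sum_congr rfl fun i hi => ?_
  rw [iteratedDerivWithin_subset st hs ht (hf.of_le ?_) hx₀]
  exact_mod_cast Nat.lt_succ_iff.1 (Finset.mem_range.1 hi)

theorem taylor_integral_remainder_of_uIcc_subset [CompleteSpace E] {n : ℕ} {x₀ x : ℝ}
    (hx : x₀ ≠ x) (hs : UniqueDiffOn ℝ s) (hsub : uIcc x₀ x ⊆ s)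
    (hf : ContDiffOn ℝ (n + 1 : ℕ) f s) :
    f x - taylorWithinEval f n s x₀ x =
      ∫ t in x₀..x, ((x - t) ^ n / n.factorial) • iteratedDerivWithin (n + 1) f s t := by
  have hu : UniqueDiffOn ℝ (uIcc x₀ x) := uniqueDiffOn_uIcc hx
  rw [← taylorWithinEval_subset x hsub hu hs (hf.of_le (by norm_cast; omega)) left_mem_uIcc,
    taylor_integral_remainder (hf.mono hsub)]
  exact integral_congr fun t ht => by rw [iteratedDerivWithin_subset hsub hu hs hf ht]

end TaylorWithinSubset

theorem integral_sub_pow_mul_eq_mul_integral_zero_one (g : ℝ → ℝ) (k : ℕ) (x y : ℝ) :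
    ∫ t in x..y, (y - t) ^ k * g t =
      (y - x) ^ (k + 1) * ∫ s in (0:ℝ)..1, (1 - s) ^ k * g (s * y + (1 - s) * x) := by
  have h := smul_integral_comp_mul_add (a := 0) (b := 1)
    (f := fun t => (y - t) ^ k * g t) (y - x) x
  simp only [mul_zero, zero_add, mul_one, sub_add_cancel, smul_eq_mul] at h
  calc ∫ t in x..y, (y - t) ^ k * g t
      = (y - x) * ∫ s in (0:ℝ)..1, (y - ((y - x) * s + x)) ^ k * g ((y - x) * s + x) := h.symm
    _ = (y - x) * ∫ s in (0:ℝ)..1, (y - x) ^ k * ((1 - s) ^ k * g (s * y + (1 - s) * x)) := by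
      congr 1
      refine integral_congr fun s _ => ?_
      rw [show y - ((y - x) * s + x) = (1 - s) * (y - x) by ring,
        show (y - x) * s + x = s * y + (1 - s) * x by ring, mul_pow]
      ring
    _ = _ := by rw [intervalIntegral.integral_const_mul, pow_succ']; ring

theorem integral_one_sub_pow (k : ℕ) : ∫ s in (0:ℝ)..1, (1 - s) ^ k = 1 / (k + 1) := by
  simp [integral_comp_sub_left fun s => s ^ k]

theorem taylorPolyWithin_eq_taylorWithinEval (f : ℝ → ℝ) (s : Set ℝ) (k : ℕ) (x y : ℝ) :
    taylorPolyWithin f s k x y = taylorWithinEval f k s x y := by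
  rw [taylor_within_apply, taylorPolyWithin]
  refine Finset.sum_congr rfl fun i _ => ?_
  rw [smul_eq_mul]
  ring

noncomputable def remainderIntegral (F : ℝ → ℝ) (k : ℕ) (x y : ℝ) : ℝ :=
  (1 / (k.factorial : ℝ)) * ∫ s in (0:ℝ)..1, (1 - s) ^ k * F (s * y + (1 - s) * x)

theorem remainderIntegral_self (F : ℝ → ℝ) (k : ℕ) (x : ℝ) :
    remainderIntegral F k x x = F x / ((k + 1).factorial : ℝ) := by
  have hx : ∀ s : ℝ, s * x + (1 - s) * x = x := fun s => by ring
  simp only [remainderIntegral, hx, intervalIntegral.integral_mul_const, integral_one_sub_pow,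
    Nat.factorial_succ]
  push_cast
  field_simp

theorem remainderQuot_eq_remainderIntegral {f : ℝ → ℝ} {S : Set ℝ} {k : ℕ} {x y : ℝ}
    (hS : UniqueDiffOn ℝ S) (hxy : uIcc x y ⊆ S) (hf : ContDiffOn ℝ (k + 1) f S) :
    remainderQuot f S k x y = remainderIntegral (iteratedDerivWithin (k + 1) f S) k x y := by
  rcases eq_or_ne y x with rfl | hne
  · rw [remainderQuot, if_pos rfl, remainderIntegral_self]
  rw [remainderQuot, if_neg hne, taylorPolyWithin_eq_taylorWithinEval,
    taylor_integral_remainder_of_uIcc_subset hne.symm hS hxy (mod_cast hf)]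
  simp only [smul_eq_mul, div_mul_eq_mul_div, intervalIntegral.integral_div]
  rw [integral_sub_pow_mul_eq_mul_integral_zero_one, remainderIntegral]
  field_simp

theorem abs_convex_combo_rpow_le {α s : ℝ} (hα : 0 ≤ α) (hs : s ∈ Icc (0:ℝ) 1) (u v : ℝ) :
    |s * u + (1 - s) * v| ^ α ≤ |u| ^ α + |v| ^ α := by
  have hcombo : |s * u + (1 - s) * v| ≤ max |u| |v| := by
    calc |s * u + (1 - s) * v| ≤ s * |u| + (1 - s) * |v| := by
          simpa only [abs_mul, abs_of_nonneg hs.1, abs_of_nonneg (sub_nonneg.2 hs.2)]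
            using abs_add_le (s * u) ((1 - s) * v)
      _ ≤ max |u| |v| := Convex.combo_le_max _ _ hs.1 (sub_nonneg.2 hs.2) (add_sub_cancel _ _)
  calc |s * u + (1 - s) * v| ^ α ≤ max |u| |v| ^ α := Real.rpow_le_rpow (abs_nonneg _) hcombo hα
    _ = max (|u| ^ α) (|v| ^ α) := Real.rpow_max (abs_nonneg _) (abs_nonneg _) hα
    _ ≤ |u| ^ α + |v| ^ α := max_le_add_of_nonneg (by positivity) (by positivity)

theorem abs_remainderIntegral_sub_le {F : ℝ → ℝ} {S : Set ℝ} {M α : ℝ} (k : ℕ)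
    (hS : Convex ℝ S) (hF : ContinuousOn F S) (hM : 0 ≤ M) (hα : 0 ≤ α)
    (hH : ∀ p ∈ S, ∀ q ∈ S, |F p - F q| ≤ M * |p - q| ^ α)
    {x₁ y₁ x₂ y₂ : ℝ} (hx₁ : x₁ ∈ S) (hy₁ : y₁ ∈ S) (hx₂ : x₂ ∈ S) (hy₂ : y₂ ∈ S) :
    |remainderIntegral F k x₁ y₁ - remainderIntegral F k x₂ y₂|
      ≤ M * (|x₁ - x₂| ^ α + |y₁ - y₂| ^ α) / k.factorial := by
  have hmem : ∀ {x y}, x ∈ S → y ∈ S → ∀ s ∈ Icc (0:ℝ) 1, s * y + (1 - s) * x ∈ S :=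
    fun hx hy s hs => hS hy hx hs.1 (sub_nonneg.2 hs.2) (add_sub_cancel _ _)
  have hint : ∀ {x y}, x ∈ S → y ∈ S →
      IntervalIntegrable (fun s => (1 - s) ^ k * F (s * y + (1 - s) * x))
        MeasureTheory.volume 0 1 :=
    fun hx hy => ContinuousOn.intervalIntegrable_of_Icc zero_le_one <|
      (continuousOn_const.sub continuousOn_id).pow k |>.mul <|
        hF.comp (by fun_prop) (hmem hx hy)
  have hbound : ∀ s ∈ uIoc (0:ℝ) 1,
      ‖(1 - s) ^ k * F (s * y₁ + (1 - s) * x₁) - (1 - s) ^ k * F (s * y₂ + (1 - s) * x₂)‖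
        ≤ M * (|x₁ - x₂| ^ α + |y₁ - y₂| ^ α) := by
    intro s hs
    replace hs : s ∈ Icc (0:ℝ) 1 := Ioc_subset_Icc_self (by simpa using hs)
    rw [Real.norm_eq_abs, ← mul_sub, abs_mul, abs_of_nonneg (pow_nonneg (sub_nonneg.2 hs.2) k)]
    calc (1 - s) ^ k * |F (s * y₁ + (1 - s) * x₁) - F (s * y₂ + (1 - s) * x₂)|
        ≤ 1 * (M * |s * (y₁ - y₂) + (1 - s) * (x₁ - x₂)| ^ α) := by
          refine mul_le_mul (pow_le_one₀ (sub_nonneg.2 hs.2) (by linarith [hs.1])) ?_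
            (abs_nonneg _) zero_le_one
          have h := hH _ (hmem hx₁ hy₁ s hs) _ (hmem hx₂ hy₂ s hs)
          rwa [show s * y₁ + (1 - s) * x₁ - (s * y₂ + (1 - s) * x₂)
            = s * (y₁ - y₂) + (1 - s) * (x₁ - x₂) by ring] at h
      _ ≤ M * (|x₁ - x₂| ^ α + |y₁ - y₂| ^ α) := by
          rw [one_mul, add_comm (|x₁ - x₂| ^ α)]
          exact mul_le_mul_of_nonneg_left (abs_convex_combo_rpow_le hα hs _ _) hM
  rw [remainderIntegral, remainderIntegral, ← mul_sub,
    ← integral_sub (hint hx₁ hy₁) (hint hx₂ hy₂), abs_mul, abs_of_pos (by positivity),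
    one_div_mul_eq_div]
  gcongr
  simpa using norm_integral_le_of_norm_le_const hbound

theorem remainder_integral_rep_and_holder_general (a b α : ℝ) (k : ℕ) (hab : a < b)
    (hα : 0 < α) (f : ℝ → ℝ) (M : ℝ)
    (hf : ContDiffOn ℝ (k + 1) f (Icc a b))
    (hH : ∀ x ∈ Icc a b, ∀ y ∈ Icc a b,
      |iteratedDerivWithin (k + 1) f (Icc a b) x - iteratedDerivWithin (k + 1) f (Icc a b) y|
        ≤ M * |x - y| ^ α) :
    (∀ x ∈ Icc a b, ∀ y ∈ Icc a b,
      remainderQuot f (Icc a b) k x y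
        = (1 / (k.factorial : ℝ)) *
            ∫ s in (0:ℝ)..1, (1 - s) ^ k * iteratedDerivWithin (k + 1) f (Icc a b)
              (s * y + (1 - s) * x)) ∧
    (∀ x₁ ∈ Icc a b, ∀ y₁ ∈ Icc a b, ∀ x₂ ∈ Icc a b, ∀ y₂ ∈ Icc a b,
      |remainderQuot f (Icc a b) k x₁ y₁ - remainderQuot f (Icc a b) k x₂ y₂|
        ≤ M * (|x₁ - x₂| ^ α + |y₁ - y₂| ^ α) / (k.factorial : ℝ)) := by
  have hS : UniqueDiffOn ℝ (Icc a b) := uniqueDiffOn_Icc hab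
  have hrep : ∀ x ∈ Icc a b, ∀ y ∈ Icc a b, remainderQuot f (Icc a b) k x y =
      remainderIntegral (iteratedDerivWithin (k + 1) f (Icc a b)) k x y :=
    fun x hx y hy => remainderQuot_eq_remainderIntegral hS (uIcc_subset_Icc hx hy) hf
  have hM : 0 ≤ M :=
    nonneg_of_mul_nonneg_left ((abs_nonneg _).trans (hH a (left_mem_Icc.2 hab.le) b
      (right_mem_Icc.2 hab.le))) (Real.rpow_pos_of_pos (abs_pos.2 (sub_ne_zero.2 hab.ne)) α)
  refine ⟨hrep, fun x₁ hx₁ y₁ hy₁ x₂ hx₂ y₂ hy₂ => ?_⟩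
  rw [hrep x₁ hx₁ y₁ hy₁, hrep x₂ hx₂ y₂ hy₂]
  exact abs_remainderIntegral_sub_le k (convex_Icc a b)
    (hf.continuousOn_iteratedDerivWithin le_rfl hS) hM hα.le hH hx₁ hy₁ hx₂ hy₂

theorem remainder_integral_rep_and_holder (a b α : ℝ) (k : ℕ) (hab : a < b)
    (hα : 0 < α) (hα1 : α < 1) (f : ℝ → ℝ) (M : ℝ)
    (hf : ContDiffOn ℝ (k + 1) f (Icc a b))
    (hH : ∀ x ∈ Icc a b, ∀ y ∈ Icc a b,
      |iteratedDerivWithin (k + 1) f (Icc a b) x - iteratedDerivWithin (k + 1) f (Icc a b) y|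
        ≤ M * |x - y| ^ α) :
    (∀ x ∈ Icc a b, ∀ y ∈ Icc a b,
      remainderQuot f (Icc a b) k x y
        = (1 / (k.factorial : ℝ)) *
            ∫ s in (0:ℝ)..1, (1 - s) ^ k * iteratedDerivWithin (k + 1) f (Icc a b)
              (s * y + (1 - s) * x)) ∧
    (∀ x₁ ∈ Icc a b, ∀ y₁ ∈ Icc a b, ∀ x₂ ∈ Icc a b, ∀ y₂ ∈ Icc a b,
      |remainderQuot f (Icc a b) k x₁ y₁ - remainderQuot f (Icc a b) k x₂ y₂|
        ≤ M * (|x₁ - x₂| ^ α + |y₁ - y₂| ^ α) / (k.factorial : ℝ)) :=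
  remainder_integral_rep_and_holder_general a b α k hab hα f M hf hH
end

section
/- If f ∈ C^{k,α}([a,b]) with 0 < α < 1, then for all x₁, x₂ ∈ [a,b] with x₁ ≠ x₂, |T_k f(x₂) - T_k f(x₁)| ≤ C ‖f‖_{C^{k,α}} |x₂-x₁|^α (ln|(b-a)/(x₂-x₁)| + 1), where C depends only on k and α. -/
open Set intervalIntegral

/-- The operator `T_k f(x) = k! ∫_a^b (f(y) - P_k(x,y))/(y-x)^{k+1} dy`. -/
noncomputable def Tk (a b : ℝ) (k : ℕ) (f : ℝ → ℝ) (x : ℝ) : ℝ :=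
  (k.factorial : ℝ) *
    ∫ y in a..b, (f y - taylorPolyWithin f (Icc a b) k x y) / (y - x) ^ (k + 1)

/-!
Taylor's theorem together with the Hölder bound on `f⁽ᵏ⁾` gives
`|f y - P_k(x, y)| ≤ M |y - x| ^ (k + α)`, so the integrand of `T_k f(x)` is bounded by
`M |y - x| ^ (α - 1)` and is integrable. Put `h = |x₂ - x₁|`. On the ball of radius `2h` about `x₁`
the two integrands are estimated separately, which costs `O(M h ^ α / α)`. Away from it, expanding
`P_k(x₁, ·)` around `x₂` shows that the coefficients of `P_k(x₁, ·) - P_k(x₂, ·)` are Taylor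
remainders of the `f⁽ⁱ⁾`, and the integrands differ by `O(M h ^ α / |y - x₁|)`; integrating over
`h ≤ |y - x₁| ≤ b - a` produces the factor `log ((b - a) / h)`.
-/

open MeasureTheory Metric

theorem abs_sub_le_two_mul_of_le {x₁ x₂ y : ℝ} (h : |x₂ - x₁| ≤ |y - x₁|) :
    |y - x₂| ≤ 2 * |y - x₁| := by
  have := abs_sub_le y x₁ x₂
  rw [abs_sub_comm x₁ x₂] at this
  linarith

section TaylorPolynomial

variable {s : Set ℝ} {α M : ℝ} {k : ℕ} {f : ℝ → ℝ}

theorem iteratedDerivWithin_iteratedDerivWithin (i j : ℕ) :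
    iteratedDerivWithin j (iteratedDerivWithin i f s) s = iteratedDerivWithin (i + j) f s := by
  have h : iteratedDerivWithin i f s = (fun g : ℝ → ℝ => derivWithin g s)^[i] f :=
    funext fun _ => iteratedDerivWithin_eq_iterate
  funext x
  rw [iteratedDerivWithin_eq_iterate, iteratedDerivWithin_eq_iterate, h, add_comm,
    Function.iterate_add_apply]

theorem ContDiffOn.contDiffOn_iteratedDerivWithin (hs : UniqueDiffOn ℝ s) {i m : ℕ}
    (hf : ContDiffOn ℝ (i + m : ℕ) f s) :
    ContDiffOn ℝ m (iteratedDerivWithin i f s) s := by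
  induction i generalizing f with
  | zero => simpa using hf
  | succ i ih =>
    rw [iteratedDerivWithin_succ']
    exact ih (hf.derivWithin hs (by push_cast; exact le_of_eq (by ring)))

theorem taylorPolyWithin_self (m : ℕ) (x : ℝ) : taylorPolyWithin f s m x x = f x := by
  rw [taylorPolyWithin, Finset.sum_eq_single 0] <;> simp_all

theorem continuous_taylorPolyWithin (m : ℕ) (x : ℝ) : Continuous (taylorPolyWithin f s m x) := by
  unfold taylorPolyWithin; fun_prop

theorem taylorPolyWithin_succ (m : ℕ) (x y : ℝ) :
    taylorPolyWithin f s (m + 1) x y = f x + ∑ i ∈ Finset.range (m + 1),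
      iteratedDerivWithin i (derivWithin f s) s x * ((y - x) ^ (i + 1) / (i + 1).factorial) := by
  rw [taylorPolyWithin, Finset.sum_range_succ', add_comm]
  simp [iteratedDerivWithin_succ', mul_div_assoc]

theorem hasDerivAt_taylorPolyWithin_succ (m : ℕ) (x y : ℝ) :
    HasDerivAt (taylorPolyWithin f s (m + 1) x) (taylorPolyWithin (derivWithin f s) s m x y) y := by
  have hpow (i : ℕ) : HasDerivAt (fun z => (z - x) ^ (i + 1) / (i + 1).factorial)
      ((y - x) ^ i / i.factorial) y := by
    refine ((((hasDerivAt_id' y).sub_const x).pow (i + 1)).div_const _).congr_deriv ?_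
    rw [Nat.factorial_succ]; push_cast; field_simp
  have hsum := (HasDerivAt.fun_sum fun i (_ : i ∈ Finset.range (m + 1)) =>
    (hpow i).const_mul (iteratedDerivWithin i (derivWithin f s) s x)).const_add (f x)
  rw [show taylorPolyWithin f s (m + 1) x = _ from funext (taylorPolyWithin_succ m x)]
  refine hsum.congr_deriv ?_
  simp only [taylorPolyWithin, mul_div_assoc]

theorem abs_sub_taylorPolyWithin_le (hs : UniqueDiffOn ℝ s) (hconv : Convex ℝ s) (hα : 0 ≤ α)
    (hM : 0 ≤ M) (m : ℕ) (hf : ContDiffOn ℝ m f s)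
    (hH : ∀ x ∈ s, ∀ y ∈ s,
      |iteratedDerivWithin m f s x - iteratedDerivWithin m f s y| ≤ M * |x - y| ^ α)
    {x y : ℝ} (hx : x ∈ s) (hy : y ∈ s) :
    |f y - taylorPolyWithin f s m x y| ≤ M * |y - x| ^ m * |y - x| ^ α := by
  induction m generalizing f y with
  | zero => simpa [taylorPolyWithin, abs_sub_comm] using hH y hy x hx
  | succ m ih =>
    have hseg : uIcc x y ⊆ s := by
      rw [← segment_eq_uIcc]; exact hconv.segment_subset hx hy
    have hderiv : ∀ z ∈ uIcc x y,
        HasDerivWithinAt (fun w => f w - taylorPolyWithin f s (m + 1) x w)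
          (derivWithin f s z - taylorPolyWithin (derivWithin f s) s m x z) (uIcc x y) z :=
      fun z hz => (((hf.differentiableOn (by simp) z (hseg hz)).hasDerivWithinAt).mono hseg).sub
        (hasDerivAt_taylorPolyWithin_succ m x z).hasDerivWithinAt
    have hbound : ∀ z ∈ uIcc x y,
        ‖derivWithin f s z - taylorPolyWithin (derivWithin f s) s m x z‖ ≤
          M * |y - x| ^ m * |y - x| ^ α := by
      intro z hz
      have hzx : |z - x| ≤ |y - x| := abs_sub_left_of_mem_uIcc hz
      calc _ ≤ M * |z - x| ^ m * |z - x| ^ α :=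
            ih (hf.derivWithin hs (by simp)) (by simpa [iteratedDerivWithin_succ'] using hH)
              (hseg hz)
        _ ≤ _ := by gcongr
    have := (convex_uIcc x y).norm_image_sub_le_of_norm_hasDerivWithin_le hderiv hbound
      left_mem_uIcc right_mem_uIcc
    simp only [taylorPolyWithin_self, sub_self, sub_zero, Real.norm_eq_abs] at this
    exact this.trans_eq (by ring)

theorem taylorPolyWithin_eq_sum_shift (x₁ x₂ y : ℝ) :
    taylorPolyWithin f s k x₁ y = ∑ i ∈ Finset.range (k + 1),
      taylorPolyWithin (iteratedDerivWithin i f s) s (k - i) x₁ x₂ * (y - x₂) ^ i /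
        i.factorial := by
  set D := fun n => iteratedDerivWithin n f s x₁
  set g := fun i j => D (i + j) * (x₂ - x₁) ^ j / j.factorial * (y - x₂) ^ i / i.factorial
  have hbinom (n : ℕ) : D n * (y - x₁) ^ n / n.factorial =
      ∑ i ∈ Finset.range (n + 1), g i (n - i) := by
    rw [show y - x₁ = (y - x₂) + (x₂ - x₁) by ring, add_pow, Finset.mul_sum, Finset.sum_div]
    refine Finset.sum_congr rfl fun i hi => ?_
    have hin : i ≤ n := Nat.lt_succ_iff.mp (Finset.mem_range.mp hi)
    simp only [g, Nat.add_sub_cancel' hin, Nat.cast_choose ℝ hin]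
    field_simp
  calc taylorPolyWithin f s k x₁ y
      = ∑ n ∈ Finset.range (k + 1), ∑ i ∈ Finset.range (n + 1), g i (n - i) :=
        Finset.sum_congr rfl fun n _ => hbinom n
    _ = ∑ i ∈ Finset.range (k + 1), ∑ j ∈ Finset.range (k + 1 - i), g i j :=
        Finset.sum_range_diag_flip _ _
    _ = _ := by
        refine Finset.sum_congr rfl fun i hi => ?_
        rw [taylorPolyWithin, Finset.sum_mul, Finset.sum_div,
          Nat.sub_add_comm (Nat.lt_succ_iff.mp (Finset.mem_range.mp hi))]
        simp only [g, D, iteratedDerivWithin_iteratedDerivWithin]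

theorem abs_taylorPolyWithin_sub_le (hs : UniqueDiffOn ℝ s) (hconv : Convex ℝ s) (hα : 0 ≤ α)
    (hM : 0 ≤ M) (hf : ContDiffOn ℝ k f s)
    (hH : ∀ x ∈ s, ∀ y ∈ s,
      |iteratedDerivWithin k f s x - iteratedDerivWithin k f s y| ≤ M * |x - y| ^ α)
    {x₁ x₂ : ℝ} (hx₁ : x₁ ∈ s) (hx₂ : x₂ ∈ s) (y : ℝ) :
    |taylorPolyWithin f s k x₁ y - taylorPolyWithin f s k x₂ y| ≤
      ∑ i ∈ Finset.range (k + 1), M * |x₂ - x₁| ^ (k - i) * |x₂ - x₁| ^ α * |y - x₂| ^ i := by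
  rw [taylorPolyWithin_eq_sum_shift x₁ x₂ y, taylorPolyWithin, ← Finset.sum_sub_distrib]
  refine (Finset.abs_sum_le_sum_abs _ _).trans (Finset.sum_le_sum fun i hi => ?_)
  have hik : i + (k - i) = k := Nat.add_sub_cancel' (Nat.lt_succ_iff.mp (Finset.mem_range.mp hi))
  have hfi : ContDiffOn ℝ (k - i : ℕ) (iteratedDerivWithin i f s) s :=
    ContDiffOn.contDiffOn_iteratedDerivWithin hs (by rwa [hik])
  have hrem := abs_sub_taylorPolyWithin_le hs hconv hα hM (k - i) hfi
    (by simpa only [iteratedDerivWithin_iteratedDerivWithin, hik] using hH) hx₁ hx₂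
  rw [← sub_div, ← sub_mul, abs_div, abs_mul, abs_pow, abs_sub_comm,
    Nat.abs_cast, div_le_iff₀ (by positivity)]
  calc _ ≤ M * |x₂ - x₁| ^ (k - i) * |x₂ - x₁| ^ α * |y - x₂| ^ i := by gcongr
    _ ≤ _ := le_mul_of_one_le_right (by positivity) (mod_cast i.factorial_pos)

theorem abs_taylorPolyWithin_sub_le_of_le (hs : UniqueDiffOn ℝ s) (hconv : Convex ℝ s)
    (hα : 0 ≤ α) (hM : 0 ≤ M) (hf : ContDiffOn ℝ k f s)
    (hH : ∀ x ∈ s, ∀ y ∈ s,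
      |iteratedDerivWithin k f s x - iteratedDerivWithin k f s y| ≤ M * |x - y| ^ α)
    {x₁ x₂ y : ℝ} (hx₁ : x₁ ∈ s) (hx₂ : x₂ ∈ s) (hle : |x₂ - x₁| ≤ |y - x₁|) :
    |taylorPolyWithin f s k x₁ y - taylorPolyWithin f s k x₂ y| ≤
      (k + 1) * 2 ^ k * M * |x₂ - x₁| ^ α * |y - x₁| ^ k := by
  refine (abs_taylorPolyWithin_sub_le hs hconv hα hM hf hH hx₁ hx₂ y).trans ?_
  calc _ ≤ ∑ _i ∈ Finset.range (k + 1), 2 ^ k * M * |x₂ - x₁| ^ α * |y - x₁| ^ k :=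
        Finset.sum_le_sum fun i hi => ?_
    _ = _ := by simp only [Finset.sum_const, Finset.card_range, nsmul_eq_mul]; push_cast; ring
  have hik : i ≤ k := Nat.lt_succ_iff.mp (Finset.mem_range.mp hi)
  calc M * |x₂ - x₁| ^ (k - i) * |x₂ - x₁| ^ α * |y - x₂| ^ i
      ≤ M * |y - x₁| ^ (k - i) * |x₂ - x₁| ^ α * (2 * |y - x₁|) ^ i := by
        gcongr
        exact abs_sub_le_two_mul_of_le hle
    _ = 2 ^ i * M * |x₂ - x₁| ^ α * (|y - x₁| ^ (k - i) * |y - x₁| ^ i) := by ring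
    _ = 2 ^ i * M * |x₂ - x₁| ^ α * |y - x₁| ^ k := by rw [← pow_add, Nat.sub_add_cancel hik]
    _ ≤ _ := by gcongr; norm_num

end TaylorPolynomial

noncomputable def taylorQuotient (f : ℝ → ℝ) (s : Set ℝ) (k : ℕ) (x y : ℝ) : ℝ :=
  (f y - taylorPolyWithin f s k x y) / (y - x) ^ (k + 1)

section TaylorQuotient

variable {s : Set ℝ} {α M : ℝ} {k : ℕ} {f : ℝ → ℝ}

theorem abs_taylorQuotient_le (hs : UniqueDiffOn ℝ s) (hconv : Convex ℝ s) (hα : 0 ≤ α)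
    (hM : 0 ≤ M) (hf : ContDiffOn ℝ k f s)
    (hH : ∀ x ∈ s, ∀ y ∈ s,
      |iteratedDerivWithin k f s x - iteratedDerivWithin k f s y| ≤ M * |x - y| ^ α)
    {x y : ℝ} (hx : x ∈ s) (hy : y ∈ s) :
    |taylorQuotient f s k x y| ≤ M * |y - x| ^ (α - 1) := by
  rcases eq_or_ne y x with rfl | hne
  · rw [taylorQuotient, sub_self, zero_pow k.succ_ne_zero, div_zero, abs_zero]
    positivity
  have hd : 0 < |y - x| := abs_pos.mpr (sub_ne_zero.mpr hne)
  rw [taylorQuotient, abs_div, abs_pow, div_le_iff₀ (by positivity), Real.rpow_sub_one hd.ne']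
  calc _ ≤ M * |y - x| ^ k * |y - x| ^ α := abs_sub_taylorPolyWithin_le hs hconv hα hM k hf hH hx hy
    _ = _ := by field_simp; ring

theorem abs_taylorQuotient_mul_pow_sub_pow_le (hs : UniqueDiffOn ℝ s) (hconv : Convex ℝ s)
    (hα : 0 ≤ α) (hα1 : α ≤ 1) (hM : 0 ≤ M) (hf : ContDiffOn ℝ k f s)
    (hH : ∀ x ∈ s, ∀ y ∈ s,
      |iteratedDerivWithin k f s x - iteratedDerivWithin k f s y| ≤ M * |x - y| ^ α)
    {x₁ x₂ y : ℝ} (hx₂ : x₂ ∈ s) (hy : y ∈ s) (hne : x₁ ≠ x₂)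
    (hfar : 2 * |x₂ - x₁| ≤ |y - x₁|) :
    |taylorQuotient f s k x₂ y| * |(y - x₁) ^ (k + 1) - (y - x₂) ^ (k + 1)| ≤
      (k + 1) * 2 ^ k * M * |x₂ - x₁| ^ α * |y - x₁| ^ k := by
  set h := |x₂ - x₁|
  set t := |y - x₁|
  have hh : 0 < h := abs_pos.mpr (sub_ne_zero.mpr hne.symm)
  have hpl : h ≤ |y - x₂| := by
    have := abs_sub_abs_le_abs_sub (y - x₁) (x₂ - x₁)
    rw [sub_sub_sub_cancel_right] at this
    linarith
  have hpow : |(y - x₁) ^ (k + 1) - (y - x₂) ^ (k + 1)| ≤ h * (k + 1) * (2 * t) ^ k := by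
    refine (abs_pow_sub_pow_le _ _ _).trans ?_
    rw [sub_sub_sub_cancel_left, Nat.add_sub_cancel, Nat.cast_succ]
    gcongr
    exact max_le (by linarith) (abs_sub_le_two_mul_of_le (by linarith))
  have hrpow : M * |y - x₂| ^ (α - 1) * h ≤ M * h ^ α := by
    calc _ ≤ M * h ^ (α - 1) * h := by
          gcongr M * ?_ * h
          exact Real.rpow_le_rpow_of_nonpos hh hpl (by linarith)
      _ = M * h ^ α := by rw [Real.rpow_sub_one hh.ne']; field_simp
  calc _ ≤ M * |y - x₂| ^ (α - 1) * (h * (k + 1) * (2 * t) ^ k) :=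
        mul_le_mul (abs_taylorQuotient_le hs hconv hα hM hf hH hx₂ hy) hpow (abs_nonneg _)
          (by positivity)
    _ = M * |y - x₂| ^ (α - 1) * h * ((k + 1) * 2 ^ k * t ^ k) := by ring
    _ ≤ M * h ^ α * ((k + 1) * 2 ^ k * t ^ k) := by gcongr
    _ = _ := by ring

theorem abs_taylorQuotient_sub_le (hs : UniqueDiffOn ℝ s) (hconv : Convex ℝ s) (hα : 0 ≤ α)
    (hα1 : α ≤ 1) (hM : 0 ≤ M) (hf : ContDiffOn ℝ k f s)
    (hH : ∀ x ∈ s, ∀ y ∈ s,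
      |iteratedDerivWithin k f s x - iteratedDerivWithin k f s y| ≤ M * |x - y| ^ α)
    {x₁ x₂ y : ℝ} (hx₁ : x₁ ∈ s) (hx₂ : x₂ ∈ s) (hy : y ∈ s) (hne : x₁ ≠ x₂)
    (hfar : 2 * |x₂ - x₁| ≤ |y - x₁|) :
    |taylorQuotient f s k x₂ y - taylorQuotient f s k x₁ y| ≤
      (k + 1) * 2 ^ (k + 1) * M * |x₂ - x₁| ^ α / |y - x₁| := by
  have ht : 0 < |y - x₁| := by
    linarith [abs_pos.mpr (sub_ne_zero.mpr hne.symm)]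
  have hdecomp : taylorQuotient f s k x₂ y - taylorQuotient f s k x₁ y =
      (taylorQuotient f s k x₂ y * ((y - x₁) ^ (k + 1) - (y - x₂) ^ (k + 1)) +
        (taylorPolyWithin f s k x₁ y - taylorPolyWithin f s k x₂ y)) / (y - x₁) ^ (k + 1) := by
    have hp : y - x₂ ≠ 0 := by
      intro hp
      rw [sub_eq_zero.mp hp] at hfar
      linarith [abs_pos.mpr (sub_ne_zero.mpr hne.symm)]
    simp only [taylorQuotient]
    field_simp [abs_pos.mp ht]
    ring
  rw [hdecomp, abs_div, abs_pow, div_le_div_iff₀ (by positivity) ht]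
  calc _ ≤ (|taylorQuotient f s k x₂ y| * |(y - x₁) ^ (k + 1) - (y - x₂) ^ (k + 1)| +
        |taylorPolyWithin f s k x₁ y - taylorPolyWithin f s k x₂ y|) * |y - x₁| := by
        gcongr
        exact (abs_add_le _ _).trans_eq (by rw [abs_mul])
    _ ≤ (2 * ((k + 1) * 2 ^ k * M * |x₂ - x₁| ^ α * |y - x₁| ^ k)) * |y - x₁| := by
        rw [two_mul]
        exact mul_le_mul_of_nonneg_right (add_le_add
          (abs_taylorQuotient_mul_pow_sub_pow_le hs hconv hα hα1 hM hf hH hx₂ hy hne hfar)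
          (abs_taylorPolyWithin_sub_le_of_le hs hconv hα hM hf hH hx₁ hx₂ (by linarith))) ht.le
    _ = _ := by ring

end TaylorQuotient

section RadialIntegrals

theorem setIntegral_preimage_abs_sub (c : ℝ) {S : Set ℝ} (hS : MeasurableSet S) (φ : ℝ → ℝ) :
    ∫ y in (fun y => |y - c|) ⁻¹' S, φ |y - c| = 2 * ∫ r in Ioi 0 ∩ S, φ r := by
  have hmeas : Measurable fun y : ℝ => |y - c| := by fun_prop
  rw [← MeasureTheory.integral_indicator (hS.preimage hmeas)]
  have hind : ((fun y => |y - c|) ⁻¹' S).indicator (fun y => φ |y - c|) =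
      fun y => S.indicator φ |y - c| :=
    funext fun _ => Set.indicator_comp_right (fun y => |y - c|)
  rw [hind, integral_sub_right_eq_self (fun u => S.indicator φ |u|) c, integral_comp_abs,
    setIntegral_indicator hS]

theorem integral_ball_abs_sub_rpow (c : ℝ) {β R : ℝ} (hβ : 0 < β) (hR : 0 ≤ R) :
    ∫ y in ball c R, |y - c| ^ (β - 1) = 2 * R ^ β / β := by
  have hball : ball c R = (fun y => |y - c|) ⁻¹' Iio R := by ext; simp [Real.dist_eq]
  rw [hball, setIntegral_preimage_abs_sub c measurableSet_Iio (· ^ (β - 1)), Ioi_inter_Iio,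
    ← integral_Ioc_eq_integral_Ioo, ← intervalIntegral.integral_of_le hR,
    integral_rpow (Or.inl (by linarith)), sub_add_cancel, Real.zero_rpow hβ.ne']
  ring

theorem integral_preimage_abs_sub_Icc_inv (c : ℝ) {d D : ℝ} (hd : 0 < d) (hdD : d ≤ D) :
    ∫ y in (fun y => |y - c|) ⁻¹' Icc d D, |y - c|⁻¹ = 2 * Real.log (D / d) := by
  rw [setIntegral_preimage_abs_sub c measurableSet_Icc (·⁻¹),
    inter_eq_right.mpr ((Icc_subset_Ioi_iff hdD).mpr hd), integral_Icc_eq_integral_Ioc,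
    ← intervalIntegral.integral_of_le hdD, integral_inv_of_pos hd (hd.trans_le hdD)]

theorem integrableOn_abs_sub_rpow_s11 {r : ℝ} (hr : -1 < r) (c : ℝ) {R : ℝ} (hR : 0 ≤ R) :
    IntegrableOn (fun y => |y - c| ^ r) (Icc (c - R) (c + R)) := by
  have hpos : IntervalIntegrable (fun u : ℝ => |u| ^ r) volume 0 R :=
    (intervalIntegral.intervalIntegrable_rpow' hr).congr fun u hu => by
      rw [uIoc_of_le hR] at hu
      simp [abs_of_pos hu.1]
  have hneg : IntervalIntegrable (fun u : ℝ => |u| ^ r) volume (-R) 0 := by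
    simpa using ((IntervalIntegrable.iff_comp_neg).mp hpos).symm
  have := (hneg.trans hpos).comp_sub_right c
  rwa [intervalIntegrable_iff_integrableOn_Icc_of_le (by linarith), neg_add_eq_sub,
    add_comm] at this

theorem integrableOn_preimage_abs_sub_Icc_inv (c : ℝ) {d D : ℝ} (hd : 0 < d) :
    IntegrableOn (fun y => |y - c|⁻¹) ((fun y => |y - c|) ⁻¹' Icc d D) := by
  have hcont : Continuous fun y : ℝ => |y - c| := by fun_prop
  refine ContinuousOn.integrableOn_compact ?_ ((hcont.continuousOn).inv₀ fun y hy => ?_)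
  · refine (isCompact_closedBall c D).of_isClosed_subset (isClosed_Icc.preimage hcont) ?_
    intro y hy
    simpa [Real.dist_eq] using hy.2
  · exact (hd.trans_le hy.1).ne'

end RadialIntegrals

theorem abs_setIntegral_sub_le_inter_add_sdiff {X : Type*} [MeasurableSpace X] {μ : Measure X}
    {s B : Set X} (hB : MeasurableSet B) {g₁ g₂ : X → ℝ} (hg₁ : IntegrableOn g₁ s μ)
    (hg₂ : IntegrableOn g₂ s μ) :
    |∫ x in s, (g₂ x - g₁ x) ∂μ| ≤
      ∫ x in s ∩ B, |g₂ x| ∂μ + ∫ x in s ∩ B, |g₁ x| ∂μ + ∫ x in s \ B, |g₂ x - g₁ x| ∂μ := by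
  have hB₁ := hg₁.mono_set (inter_subset_left (t := B))
  have hB₂ := hg₂.mono_set (inter_subset_left (t := B))
  rw [← integral_inter_add_sdiff (f := fun x => g₂ x - g₁ x) hB (hg₂.sub hg₁),
    ← integral_add hB₂.abs hB₁.abs]
  refine (abs_add_le _ _).trans (add_le_add ?_ (abs_integral_le_integral_abs))
  exact abs_integral_le_integral_abs.trans
    (integral_mono (hB₂.sub hB₁).abs (hB₂.abs.add hB₁.abs) fun x => abs_sub _ _)

section TaylorQuotientIntegrals

variable {a b α M : ℝ} {k : ℕ} {f : ℝ → ℝ}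

theorem Tk_eq_setIntegral_taylorQuotient (hab : a ≤ b) (x : ℝ) :
    Tk a b k f x = k.factorial * ∫ y in Ioc a b, taylorQuotient f (Icc a b) k x y := by
  rw [Tk, intervalIntegral.integral_of_le hab]
  rfl

theorem integrableOn_taylorQuotient (hab : a < b) (hα : 0 < α) (hM : 0 ≤ M)
    (hf : ContDiffOn ℝ k f (Icc a b))
    (hH : ∀ x ∈ Icc a b, ∀ y ∈ Icc a b,
      |iteratedDerivWithin k f (Icc a b) x - iteratedDerivWithin k f (Icc a b) y| ≤
        M * |x - y| ^ α)
    {x : ℝ} (hx : x ∈ Icc a b) :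
    IntegrableOn (taylorQuotient f (Icc a b) k x) (Icc a b) := by
  have hmaj : IntegrableOn (fun y => M * |y - x| ^ (α - 1)) (Icc a b) :=
    ((integrableOn_abs_sub_rpow_s11 (by linarith) x (R := b - a) (by linarith)).mono_set
      (Icc_subset_Icc (by linarith [hx.2]) (by linarith [hx.1]))).const_mul M
  have hcont : ContinuousOn (taylorQuotient f (Icc a b) k x) (Icc a b \ {x}) :=
    ((hf.continuousOn.mono sdiff_subset).sub (continuous_taylorPolyWithin k x).continuousOn).div
      (by fun_prop) fun y hy => pow_ne_zero _ (sub_ne_zero.mpr hy.2)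
  have hmeas : AEStronglyMeasurable (taylorQuotient f (Icc a b) k x)
      (volume.restrict (Icc a b)) := by
    rw [← Measure.restrict_congr_set (sdiff_null_ae_eq_self (measure_singleton x))]
    exact hcont.aestronglyMeasurable (measurableSet_Icc.diff (measurableSet_singleton x))
  refine hmaj.mono' hmeas (ae_restrict_of_forall_mem measurableSet_Icc fun y hy => ?_)
  exact abs_taylorQuotient_le (uniqueDiffOn_Icc hab) (convex_Icc a b) hα.le hM hf hH hx hy

theorem setIntegral_abs_taylorQuotient_le (hab : a < b) (hα : 0 < α) (hM : 0 ≤ M)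
    (hf : ContDiffOn ℝ k f (Icc a b))
    (hH : ∀ x ∈ Icc a b, ∀ y ∈ Icc a b,
      |iteratedDerivWithin k f (Icc a b) x - iteratedDerivWithin k f (Icc a b) y| ≤
        M * |x - y| ^ α)
    {x : ℝ} (hx : x ∈ Icc a b) {S : Set ℝ} (hS : MeasurableSet S) (hSab : S ⊆ Icc a b)
    {R : ℝ} (hR : 0 ≤ R) (hSR : S ⊆ ball x R) :
    ∫ y in S, |taylorQuotient f (Icc a b) k x y| ≤ 2 * M * R ^ α / α := by
  have hmaj : IntegrableOn (fun y => M * |y - x| ^ (α - 1)) (ball x R) :=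
    ((integrableOn_abs_sub_rpow_s11 (by linarith) x hR).mono_set
      (by rw [Real.ball_eq_Ioo]; exact Ioo_subset_Icc_self)).const_mul M
  calc ∫ y in S, |taylorQuotient f (Icc a b) k x y|
      ≤ ∫ y in S, M * |y - x| ^ (α - 1) :=
        setIntegral_mono_on
          ((integrableOn_taylorQuotient hab hα hM hf hH hx).mono_set hSab).abs
          (hmaj.mono_set hSR) hS fun y hy =>
            abs_taylorQuotient_le (uniqueDiffOn_Icc hab) (convex_Icc a b) hα.le hM hf hH hx
              (hSab hy)
    _ ≤ ∫ y in ball x R, M * |y - x| ^ (α - 1) :=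
        setIntegral_mono_set hmaj (.of_forall fun y => by positivity) hSR.eventuallyLE
    _ = 2 * M * R ^ α / α := by
        rw [MeasureTheory.integral_const_mul, integral_ball_abs_sub_rpow x hα hR]
        ring

theorem setIntegral_abs_taylorQuotient_sub_le (hab : a < b) (hα : 0 < α) (hα1 : α ≤ 1)
    (hM : 0 ≤ M) (hf : ContDiffOn ℝ k f (Icc a b))
    (hH : ∀ x ∈ Icc a b, ∀ y ∈ Icc a b,
      |iteratedDerivWithin k f (Icc a b) x - iteratedDerivWithin k f (Icc a b) y| ≤
        M * |x - y| ^ α)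
    {x₁ x₂ : ℝ} (hx₁ : x₁ ∈ Icc a b) (hx₂ : x₂ ∈ Icc a b) (hne : x₁ ≠ x₂) {S : Set ℝ}
    (hS : MeasurableSet S) (hSab : S ⊆ Icc a b) (hSfar : ∀ y ∈ S, 2 * |x₂ - x₁| ≤ |y - x₁|) :
    ∫ y in S, |taylorQuotient f (Icc a b) k x₂ y - taylorQuotient f (Icc a b) k x₁ y| ≤
      2 * ((k + 1) * 2 ^ (k + 1) * M * |x₂ - x₁| ^ α) * Real.log ((b - a) / |x₂ - x₁|) := by
  set h := |x₂ - x₁|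
  set C := (k + 1) * 2 ^ (k + 1) * M * h ^ α
  have hh : 0 < h := abs_pos.mpr (sub_ne_zero.mpr hne.symm)
  have hSA : S ⊆ (fun y => |y - x₁|) ⁻¹' Icc h (b - a) := fun y hy =>
    ⟨by linarith [hSfar y hy], abs_sub_le_iff.mpr
      ⟨by linarith [(hSab hy).2, hx₁.1], by linarith [(hSab hy).1, hx₁.2]⟩⟩
  have hhba : h ≤ b - a := abs_sub_le_iff.mpr
    ⟨by linarith [hx₂.2, hx₁.1], by linarith [hx₂.1, hx₁.2]⟩
  have hmaj : IntegrableOn (fun y => C * |y - x₁|⁻¹) ((fun y => |y - x₁|) ⁻¹' Icc h (b - a)) :=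
    (integrableOn_preimage_abs_sub_Icc_inv x₁ hh).const_mul C
  calc _ ≤ ∫ y in S, C * |y - x₁|⁻¹ :=
        setIntegral_mono_on
          (((integrableOn_taylorQuotient hab hα hM hf hH hx₂).sub
            (integrableOn_taylorQuotient hab hα hM hf hH hx₁)).mono_set hSab).abs
          (hmaj.mono_set hSA) hS fun y hy =>
            (abs_taylorQuotient_sub_le (uniqueDiffOn_Icc hab) (convex_Icc a b) hα.le hα1 hM hf hH
              hx₁ hx₂ (hSab hy) hne (hSfar y hy)).trans_eq (div_eq_mul_inv _ _)
    _ ≤ ∫ y in (fun y => |y - x₁|) ⁻¹' Icc h (b - a), C * |y - x₁|⁻¹ :=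
        setIntegral_mono_set hmaj (.of_forall fun y => by positivity) hSA.eventuallyLE
    _ = _ := by
        rw [MeasureTheory.integral_const_mul, integral_preimage_abs_sub_Icc_inv x₁ hh hhba]
        ring

end TaylorQuotientIntegrals

theorem Tk_log_holder (k : ℕ) (α : ℝ) (hα : 0 < α) (hα1 : α < 1) :
    ∃ C > 0, ∀ (a b : ℝ), a < b → ∀ (f : ℝ → ℝ) (M : ℝ), 0 ≤ M →
      ContDiffOn ℝ k f (Icc a b) →
      (∀ x ∈ Icc a b, ∀ y ∈ Icc a b,
        |iteratedDerivWithin k f (Icc a b) x - iteratedDerivWithin k f (Icc a b) y|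
          ≤ M * |x - y| ^ α) →
      (∀ i ≤ k, ∀ x ∈ Icc a b, |iteratedDerivWithin i f (Icc a b) x| ≤ M) →
      ∀ x₁ ∈ Icc a b, ∀ x₂ ∈ Icc a b, x₁ ≠ x₂ →
        |Tk a b k f x₂ - Tk a b k f x₁|
          ≤ C * M * |x₂ - x₁| ^ α * (Real.log ((b - a) / |x₂ - x₁|) + 1) := by
  refine ⟨k.factorial * (4 * 3 ^ α / α + 2 * ((k + 1) * 2 ^ (k + 1))), by positivity, ?_⟩
  intro a b hab f M hM hf hH _ x₁ hx₁ x₂ hx₂ hne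
  set h := |x₂ - x₁|
  have hh : 0 < h := abs_pos.mpr (sub_ne_zero.mpr hne.symm)
  set L := Real.log ((b - a) / h)
  have hL : 0 ≤ L := Real.log_nonneg <| (one_le_div hh).mpr <|
    abs_sub_le_iff.mpr ⟨by linarith [hx₂.2, hx₁.1], by linarith [hx₂.1, hx₁.2]⟩
  have hQ {x} (hx : x ∈ Icc a b) := (integrableOn_taylorQuotient hab hα hM hf hH hx).mono_set
    Ioc_subset_Icc_self
  have hnear {x} (hx : x ∈ Icc a b) (hball : ball x₁ (2 * h) ⊆ ball x (3 * h)) :=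
    setIntegral_abs_taylorQuotient_le hab hα hM hf hH hx
      (measurableSet_Ioc.inter measurableSet_ball) (inter_subset_left.trans Ioc_subset_Icc_self)
      (by positivity) (inter_subset_right.trans hball)
  have hfar := setIntegral_abs_taylorQuotient_sub_le hab hα hα1.le hM hf hH hx₁ hx₂ hne
    (measurableSet_Ioc.diff (measurableSet_ball (x := x₁) (ε := 2 * h)))
    (sdiff_subset.trans Ioc_subset_Icc_self) fun y hy => by simpa [Real.dist_eq] using hy.2
  rw [Tk_eq_setIntegral_taylorQuotient hab.le, Tk_eq_setIntegral_taylorQuotient hab.le,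
    ← mul_sub, ← integral_sub (hQ hx₂) (hQ hx₁), abs_mul, Nat.abs_cast]
  calc _ ≤ (k.factorial : ℝ) *
        (2 * M * (3 * h) ^ α / α + 2 * M * (3 * h) ^ α / α +
          2 * ((k + 1) * 2 ^ (k + 1) * M * h ^ α) * L) := by
        gcongr
        refine (abs_setIntegral_sub_le_inter_add_sdiff measurableSet_ball (hQ hx₁) (hQ hx₂)).trans
          (add_le_add (add_le_add (hnear hx₂ (ball_subset_ball' ?_))
            (hnear hx₁ (ball_subset_ball (by linarith)))) hfar)
        rw [dist_comm, Real.dist_eq]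
        linarith
    _ ≤ _ := by
        rw [Real.mul_rpow (by norm_num) hh.le, ← sub_nonneg]
        ring_nf
        positivity
end

section
/- For |x| < 1, the principal value integral p.v. ∫_{-1}^1 1/(√(1-t²)(x-t)) dt equals 0. -/
/-!
With `c = √(1 - x²)`, `F t = c⁻¹ (log (1 - x t + c √(1 - t²)) - log |x - t|)` is a primitive
of the integrand on each side of `x` and vanishes at `±1`; the integrand has constant sign on each
side, so the fundamental theorem of calculus needs no separate integrability argument. The
truncated integral is `F (x - ε) - F (x + ε)`, where the two `log ε` terms cancel, and what is
left is continuous in `ε` and vanishes at `ε = 0`.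
-/

open Set Filter intervalIntegral

section SignedDerivative

variable {f f' : ℝ → ℝ} {a b : ℝ}

theorem intervalIntegral.integral_eq_sub_of_hasDerivAt_of_nonneg (hab : a ≤ b)
    (hcont : ContinuousOn f (Icc a b)) (hderiv : ∀ t ∈ Ioo a b, HasDerivAt f (f' t) t)
    (hpos : ∀ t ∈ Ioo a b, 0 ≤ f' t) : ∫ t in a..b, f' t = f b - f a := by
  refine integral_eq_sub_of_hasDerivAt_of_le hab hcont hderiv ?_
  rw [← uIcc_of_le hab] at hcont
  refine intervalIntegrable_deriv_of_nonneg hcont ?_ ?_ <;>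
    simpa only [min_eq_left hab, max_eq_right hab]

theorem intervalIntegral.integral_eq_sub_of_hasDerivAt_of_nonpos (hab : a ≤ b)
    (hcont : ContinuousOn f (Icc a b)) (hderiv : ∀ t ∈ Ioo a b, HasDerivAt f (f' t) t)
    (hneg : ∀ t ∈ Ioo a b, f' t ≤ 0) : ∫ t in a..b, f' t = f b - f a := by
  have h := integral_eq_sub_of_hasDerivAt_of_nonneg (f := -f) (f' := -f') hab hcont.neg
    (fun t ht => (hderiv t ht).neg) (fun t ht => neg_nonneg.mpr (hneg t ht))
  simp only [Pi.neg_apply, intervalIntegral.integral_neg, neg_sub_neg] at h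
  linarith

end SignedDerivative

namespace FiniteHilbert

open Real

noncomputable def num (x t : ℝ) : ℝ :=
  1 - x * t + √(1 - x ^ 2) * √(1 - t ^ 2)

/-- `Real.log (x - t)` is `log |x - t|`, so this is a primitive on both sides of `x`. -/
noncomputable def primitive (x t : ℝ) : ℝ :=
  (√(1 - x ^ 2))⁻¹ * (log (num x t) - log (x - t))

theorem num_pos {x t : ℝ} (hx : |x| < 1) (ht : |t| ≤ 1) : 0 < num x t := by
  have hxt : x * t < 1 := by
    calc x * t ≤ |x| * |t| := by rw [← abs_mul]; exact le_abs_self _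
      _ ≤ |x| := mul_le_of_le_one_right (abs_nonneg x) ht
      _ < 1 := hx
  unfold num
  positivity

theorem hasDerivAt_num (x : ℝ) {t : ℝ} (ht : t ∈ Ioo (-1 : ℝ) 1) :
    HasDerivAt (num x) (-x - √(1 - x ^ 2) * t / √(1 - t ^ 2)) t := by
  have hpos : 0 < 1 - t ^ 2 := by nlinarith [ht.1, ht.2]
  have hsqrt : HasDerivAt (fun u : ℝ => √(1 - u ^ 2)) (-(2 * t) / (2 * √(1 - t ^ 2))) t := by
    refine HasDerivAt.sqrt ?_ hpos.ne'
    simpa using (hasDerivAt_pow 2 t).const_sub 1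
  have hs : √(1 - t ^ 2) ≠ 0 := (sqrt_pos.mpr hpos).ne'
  refine (((hasDerivAt_id t).const_mul x).const_sub 1 |>.add
    (hsqrt.const_mul (√(1 - x ^ 2)))).congr_deriv ?_
  field_simp
  ring

theorem hasDerivAt_primitive {x t : ℝ} (hx : |x| < 1) (ht : t ∈ Ioo (-1 : ℝ) 1) (htx : t ≠ x) :
    HasDerivAt (primitive x) (1 / (√(1 - t ^ 2) * (x - t))) t := by
  have hc2 : √(1 - x ^ 2) ^ 2 = 1 - x ^ 2 := sq_sqrt (by nlinarith [abs_lt.mp hx])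
  have hs2 : √(1 - t ^ 2) ^ 2 = 1 - t ^ 2 := sq_sqrt (by nlinarith [ht.1, ht.2])
  have hc : √(1 - x ^ 2) ≠ 0 := (sqrt_pos.mpr (by nlinarith [abs_lt.mp hx])).ne'
  have hs : √(1 - t ^ 2) ≠ 0 := (sqrt_pos.mpr (by nlinarith [ht.1, ht.2])).ne'
  have hN := num_pos hx (abs_le.mpr ⟨ht.1.le, ht.2.le⟩)
  have hxt : x - t ≠ 0 := sub_ne_zero.mpr htx.symm
  have hlog_sub : HasDerivAt (fun u => log (x - u)) (-1 / (x - t)) t :=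
    ((hasDerivAt_id t).const_sub x).log hxt |>.congr_deriv (by simp)
  refine (((hasDerivAt_num x ht).log hN.ne').sub hlog_sub |>.const_mul
    (√(1 - x ^ 2))⁻¹).congr_deriv ?_
  -- with `c = √(1 - x²)`, `s = √(1 - t²)` this is `(-x s - c t) (x - t) + s num = c num`
  unfold num at hN ⊢
  field_simp
  linear_combination (√(1 - x ^ 2)) * hs2 - √(1 - t ^ 2) * hc2

theorem continuous_num (x : ℝ) : Continuous (num x) := by
  unfold num
  fun_prop

theorem continuousOn_primitive {x : ℝ} (hx : |x| < 1) {s : Set ℝ} (hs : s ⊆ Icc (-1) 1)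
    (hxs : x ∉ s) : ContinuousOn (primitive x) s := by
  refine continuousOn_const.mul (.sub ?_ ?_)
  · exact (continuous_num x).continuousOn.log fun t ht => (num_pos hx (abs_le.mpr (hs ht))).ne'
  · exact (continuousOn_const.sub continuousOn_id).log fun t ht =>
      sub_ne_zero.mpr (ne_of_mem_of_not_mem ht hxs).symm

theorem primitive_neg_one (x : ℝ) : primitive x (-1) = 0 := by
  simp [primitive, num, add_comm]

theorem primitive_one (x : ℝ) : primitive x 1 = 0 := by
  rw [primitive, num, ← log_neg_eq_log (x - 1)]
  ring_nf

theorem primitive_sub_primitive (x ε : ℝ) :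
    primitive x (x - ε) - primitive x (x + ε) =
      (√(1 - x ^ 2))⁻¹ * (log (num x (x - ε)) - log (num x (x + ε))) := by
  rw [primitive, primitive, sub_sub_cancel, sub_add_cancel_left, log_neg_eq_log]
  ring

theorem integral_neg_one_to_eq_primitive {x b : ℝ} (hx : |x| < 1) (hb : -1 ≤ b) (hbx : b < x) :
    ∫ t in (-1 : ℝ)..b, 1 / (√(1 - t ^ 2) * (x - t)) = primitive x b := by
  have hb1 : b < 1 := hbx.trans (abs_lt.mp hx).2
  rw [integral_eq_sub_of_hasDerivAt_of_nonneg hb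
    (continuousOn_primitive hx (Icc_subset_Icc_right hb1.le) fun h => hbx.not_ge h.2)
    (fun t ht => hasDerivAt_primitive hx ⟨ht.1, ht.2.trans hb1⟩ (ht.2.trans hbx).ne)
    (fun t ht => by have := sub_pos.mpr (ht.2.trans hbx); positivity),
    primitive_neg_one, sub_zero]

theorem integral_to_one_eq_neg_primitive {x a : ℝ} (hx : |x| < 1) (ha : x < a) (ha1 : a ≤ 1) :
    ∫ t in a..(1 : ℝ), 1 / (√(1 - t ^ 2) * (x - t)) = -primitive x a := by
  have ha1' : -1 < a := (abs_lt.mp hx).1.trans ha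
  rw [integral_eq_sub_of_hasDerivAt_of_nonpos ha1
    (continuousOn_primitive hx (Icc_subset_Icc_left ha1'.le) fun h => ha.not_ge h.1)
    (fun t ht => hasDerivAt_primitive hx ⟨ha1'.trans ht.1, ht.2⟩ (ha.trans ht.1).ne')
    (fun t ht => div_nonpos_of_nonneg_of_nonpos zero_le_one
      (mul_nonpos_of_nonneg_of_nonpos (sqrt_nonneg _) (by linarith [ht.1]))),
    primitive_one, zero_sub]

end FiniteHilbert

theorem pv_integral_zero (x : ℝ) (hx : |x| < 1) :
    Tendsto (fun ε : ℝ =>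
        (∫ t in (-1 : ℝ)..(x - ε), 1 / (Real.sqrt (1 - t ^ 2) * (x - t))) +
        ∫ t in (x + ε)..(1 : ℝ), 1 / (Real.sqrt (1 - t ^ 2) * (x - t)))
      (nhdsWithin 0 (Ioi 0)) (nhds 0) := by
  open FiniteHilbert in
  obtain ⟨hx₁, hx₂⟩ := abs_lt.mp hx
  have hcont : ContinuousAt (fun ε => primitive x (x - ε) - primitive x (x + ε)) 0 := by
    simp_rw [primitive_sub_primitive]
    have hN : num x x ≠ 0 := (num_pos hx hx.le).ne'
    refine continuousAt_const.mul (.sub ?_ ?_) <;>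
      exact ContinuousAt.log ((continuous_num x).continuousAt.comp (by fun_prop)) (by simpa)
  have hlim := hcont.tendsto.mono_left (nhdsWithin_le_nhds (s := Ioi 0))
  rw [sub_zero, add_zero, sub_self] at hlim
  refine hlim.congr' ?_
  have hδ : 0 < min (1 + x) (1 - x) := lt_min (by linarith) (by linarith)
  filter_upwards [Ioo_mem_nhdsGT hδ] with ε ⟨hε, hεδ⟩
  have hε₁ : ε < 1 + x := hεδ.trans_le (min_le_left _ _)
  have hε₂ : ε < 1 - x := hεδ.trans_le (min_le_right _ _)
  rw [integral_neg_one_to_eq_primitive hx (by linarith) (by linarith),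
    integral_to_one_eq_neg_primitive hx (by linarith) (by linarith), sub_eq_add_neg]
end
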